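/- Let m : [S,T] × ℝⁿ → ℝ^r and x̄ : [S,T] → ℝⁿ satisfy hypotheses (BV1) and (BV2). Take any sequence of partitions {t^j_i}_{i=0}^{N_j} of [S,T] with diam({t^j_i}) → 0, any sequence ρ^j ↓ 0, and collections {ξ^j_i} with ξ^j_i ∈ x̄(t) + ρ^j 𝔹 for some t ∈ [t^j_i, t^j_{i+1}], and define μ^j := Σ_{i=0}^{N_j−1} [m(t^j_{i+1}, ξ^j_i) − m(t^j_i, ξ^j_i)] δ_{t^j_i}. Then for every continuous function g : [S,T] → ℝ^r, the sequence of real numbers ⟨μ^j, g⟩ := ∫_{[S,T]} g(t)·dμ^j(t) is a Cauchy sequence; in particular lim_{j→∞} sup_{j'≥j} |⟨μ^j − μ^{j'}, g⟩| = 0. -/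

import Mathlib

open Set Metric Filter MeasureTheory Pointwise
open scoped ENNReal Topology

noncomputable section

/-- Euclidean `n`-space `ℝⁿ`. -/
abbrev En (n : ℕ) : Type := EuclideanSpace ℝ (Fin n)

/-- A partition `{t₀ = S, t₁, …, t_N = t}` of the interval `[S, t]`. -/
structure IntervalPartition (S t : ℝ) where
  N : ℕ
  pts : ℕ → ℝ
  hN : 0 < N
  first : pts 0 = S
  last : pts N = t
  mono : ∀ i, i < N → pts i < pts (i + 1)

/-- `diam(𝒯) ≤ ε` : every subinterval of the partition has length at most `ε`. -/
def IntervalPartition.diamLE {S t : ℝ} (P : IntervalPartition S t) (ε : ℝ) : Prop :=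
  ∀ i, i < P.N → P.pts (i + 1) - P.pts i ≤ ε

/-- The sum `I^δ(𝒯) = Σᵢ sup { |m(tᵢ₊₁,x) − m(tᵢ,x)| : x ∈ x̄([tᵢ,tᵢ₊₁]) + δ𝔹 }`
for a function `m` along `x̄` (distances measured by `edist` in the target). -/
noncomputable def fSum {E α : Type*} [NormedAddCommGroup E] [PseudoEMetricSpace α]
    (m : ℝ → E → α) (xbar : ℝ → E) (δ : ℝ) {S t : ℝ} (P : IntervalPartition S t) : ℝ≥0∞ :=
  ∑ i ∈ Finset.range P.N,
    ⨆ x ∈ xbar '' Set.Icc (P.pts i) (P.pts (i + 1)) + Metric.closedBall (0 : E) δ,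
      edist (m (P.pts (i + 1)) x) (m (P.pts i) x)

/-- The `(δ,ε)`-perturbed cumulative variation function `η^δ_ε(t)` of `m(·,x)` along
`x̄`: the supremum of `I^δ(𝒯)` over partitions `𝒯` of `[S,t]` with `diam(𝒯) ≤ ε`. -/
noncomputable def fEtaEps {E α : Type*} [NormedAddCommGroup E] [PseudoEMetricSpace α]
    (m : ℝ → E → α) (xbar : ℝ → E) (δ ε : ℝ) (S t : ℝ) : ℝ≥0∞ :=
  ⨆ (P : IntervalPartition S t) (_ : P.diamLE ε), fSum m xbar δ P

/-- The `δ`-perturbed cumulative variation function `η^δ(t) = lim_{ε↓0} η^δ_ε(t)`. -/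
noncomputable def fEtaDelta {E α : Type*} [NormedAddCommGroup E] [PseudoEMetricSpace α]
    (m : ℝ → E → α) (xbar : ℝ → E) (δ : ℝ) (S t : ℝ) : ℝ≥0∞ :=
  ⨅ (ε : ℝ) (_ : 0 < ε), fEtaEps m xbar δ ε S t

/-- The cumulative variation function `η(t) = lim_{δ↓0} η^δ(t)` of `m(·,x)` along `x̄`. -/
noncomputable def fEta {E α : Type*} [NormedAddCommGroup E] [PseudoEMetricSpace α]
    (m : ℝ → E → α) (xbar : ℝ → E) (S t : ℝ) : ℝ≥0∞ :=
  ⨅ (δ : ℝ) (_ : 0 < δ), fEtaDelta m xbar δ S t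

/-- `m(·,x)` has bounded variation along `x̄` on `[S,T]` : `η(T) < ∞`. -/
def FunHasBVAlong {E α : Type*} [NormedAddCommGroup E] [PseudoEMetricSpace α]
    (m : ℝ → E → α) (xbar : ℝ → E) (S T : ℝ) : Prop :=
  fEta m xbar S T < ⊤

/-- Hypothesis (BV1): `x̄` is continuous and, for some `δ' > 0`, `m(t,·)` is
continuously differentiable on the interior of `x̄(t) + δ'𝔹` for all `t ∈ [S,T]`. -/
def HypBV1 {n r : ℕ} (m : ℝ → En n → En r) (xbar : ℝ → En n) (S T δ' : ℝ) : Prop :=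
  ContinuousOn xbar (Set.Icc S T) ∧ 0 < δ' ∧
    ∀ t ∈ Set.Icc S T, ContDiffOn ℝ 1 (m t) (Metric.ball (xbar t) δ')

/-- Hypothesis (BV2): both `m(·,x)` and `∇ₓm(·,x)` have bounded variation along `x̄`. -/
def HypBV2 {n r : ℕ} (m : ℝ → En n → En r) (xbar : ℝ → En n) (S T : ℝ) : Prop :=
  FunHasBVAlong m xbar S T ∧
    FunHasBVAlong (fun t x => fderiv ℝ (m t) x) xbar S T

/-- The pairing `∫ g·dμʲ = Σᵢ ⟨g(tᵢ), m(tᵢ₊₁,ξᵢ) − m(tᵢ,ξᵢ)⟩` of a continuous function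
`g` with the discrete `ℝʳ`-valued measure `μʲ = Σᵢ [m(tᵢ₊₁,ξᵢ) − m(tᵢ,ξᵢ)] δ_{tᵢ}`. -/
noncomputable def discretePairing {n r : ℕ} (m : ℝ → En n → En r) {S T : ℝ}
    (P : IntervalPartition S T) (ξ : ℕ → En n) (g : ℝ → En r) : ℝ :=
  ∑ i ∈ Finset.range P.N, ∑ l : Fin r,
    g (P.pts i) l * (m (P.pts (i + 1)) (ξ i) l - m (P.pts i) (ξ i) l)

/-- The integral `∫ f dμ` of a real function against a signed Borel measure,
via the Jordan decomposition. -/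
noncomputable def signedIntegral (μ : MeasureTheory.SignedMeasure ℝ) (f : ℝ → ℝ) : ℝ :=
  (∫ t, f t ∂μ.toJordanDecomposition.posPart) -
    ∫ t, f t ∂μ.toJordanDecomposition.negPart

/-- The pairing `∫ g·dμ = Σ_l ∫ g_l dμ_l` of a continuous function with an
`ℝʳ`-valued Borel measure `μ` (given through its `r` signed components). -/
noncomputable def signedPairing {r : ℕ} (μ : Fin r → MeasureTheory.SignedMeasure ℝ)
    (g : ℝ → En r) : ℝ :=
  ∑ l : Fin r, signedIntegral (μ l) fun t => g t l

/-- `μ` (an `ℝʳ`-valued Borel measure on `[S,T]`, given through its signed components)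
is the partial variation measure `B ↦ ∫_B d_t m(t,x̄(t))` of `m(·,x)` along `x̄`:
it is supported on `[S,T]` and is the weak* limit of the discrete measures
`μʲ = Σᵢ [m(tʲᵢ₊₁,ξʲᵢ) − m(tʲᵢ,ξʲᵢ)] δ_{tʲᵢ}`, for every sequence of partitions of
`[S,T]` with diameters tending to `0` and points `ξʲᵢ = x̄(t)`, `t ∈ [tʲᵢ,tʲᵢ₊₁]`. -/
def IsPartialVariationMeasure {n r : ℕ} (m : ℝ → En n → En r) (xbar : ℝ → En n)
    (S T : ℝ) (μ : Fin r → MeasureTheory.SignedMeasure ℝ) : Prop :=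
  (∀ l, (μ l).restrict (Set.Icc S T)ᶜ = 0) ∧
  ∀ (P : ℕ → IntervalPartition S T) (ξ : ℕ → ℕ → En n),
    (∀ ε : ℝ, 0 < ε → ∃ J : ℕ, ∀ j ≥ J, (P j).diamLE ε) →
    (∀ j i, i < (P j).N →
      ∃ t ∈ Set.Icc ((P j).pts i) ((P j).pts (i + 1)), ξ j i = xbar t) →
    ∀ g : ℝ → En r, Continuous g →
      Tendsto (fun j => discretePairing m (P j) (ξ j) g) atTop (𝓝 (signedPairing μ g))

/-!
Pass from two partitions to a common refinement `Q` and write both pairings as sums over the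
intervals `[a, b]` of `Q`. With `Δ := m(b, ·) - m(a, ·)`, the difference of the two summands is
`⟨g(τ₁) - g(τ₂), Δ(y₁)⟩ + ⟨g(τ₂), Δ(y₁) - Δ(y₂)⟩`. The first term is small by uniform continuity
of `g`, and sums to at most a multiple of the variation of `m`; by the mean value theorem the
second is bounded by `|g| · |y₁ - y₂|` times the oscillation of `∇ₓm` over `[a, b]` near `x̄`,
and these oscillations sum to at most the variation of `∇ₓm`, while `|y₁ - y₂|` is small since
both tags lie close to `x̄(a)`.
-/
open scoped InnerProductSpace
open Finset (range)

namespace IntervalPartition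

variable {S t : ℝ} (P : IntervalPartition S t)

theorem strictMonoOn_pts : StrictMonoOn P.pts (Iic P.N) :=
  strictMonoOn_Iic_of_lt_succ P.mono

theorem pts_mem_Icc {i : ℕ} (hi : i ≤ P.N) : P.pts i ∈ Icc S t := by
  have h0 : (0 : ℕ) ∈ Iic P.N := Nat.zero_le _
  refine ⟨?_, ?_⟩
  · simpa only [P.first] using P.strictMonoOn_pts.monotoneOn h0 hi (Nat.zero_le i)
  · simpa only [P.last] using P.strictMonoOn_pts.monotoneOn hi (le_refl P.N) hi

def points : Finset ℝ := (range (P.N + 1)).image P.pts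

theorem mem_points {x : ℝ} : x ∈ P.points ↔ ∃ i ≤ P.N, P.pts i = x := by
  simp [points]

theorem exists_points_eq {A : Finset ℝ} (hSt : S < t) (hS : S ∈ A) (ht : t ∈ A)
    (hA : ∀ x ∈ A, x ∈ Icc S t) : ∃ Q : IntervalPartition S t, Q.points = A := by
  set f := A.orderEmbOfFin rfl
  have hcard : 1 < A.card := Finset.one_lt_card.mpr ⟨S, hS, t, ht, hSt.ne⟩
  have hne : A.Nonempty := ⟨S, hS⟩
  have hmin : A.min' hne = S :=
    le_antisymm (A.min'_le S hS) (A.le_min' hne S fun x hx => (hA x hx).1)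
  have hmax : A.max' hne = t :=
    le_antisymm (A.max'_le hne t fun x hx => (hA x hx).2) (A.le_max' t ht)
  let pts : ℕ → ℝ := fun i => if h : i < A.card then f ⟨i, h⟩ else t
  have hpts : ∀ i (h : i < A.card), pts i = f ⟨i, h⟩ := fun i h => dif_pos h
  refine ⟨⟨A.card - 1, pts, by omega, ?_, ?_, ?_⟩, ?_⟩
  · rw [hpts 0 (by omega), Finset.orderEmbOfFin_zero rfl (by omega), hmin]
  · rw [hpts _ (by omega), Finset.orderEmbOfFin_last rfl (by omega), hmax]
  · intro i hi
    rw [hpts i (by omega), hpts (i + 1) (by omega)]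
    exact f.strictMono (Fin.mk_lt_mk.mpr i.lt_succ_self)
  · ext x
    simp only [mem_points]
    constructor
    · rintro ⟨i, hi, rfl⟩
      rw [hpts i (by omega)]
      exact A.orderEmbOfFin_mem rfl _
    · intro hx
      obtain ⟨i, rfl⟩ : x ∈ Set.range f := by rwa [Finset.range_orderEmbOfFin]
      exact ⟨i, by omega, hpts i i.2⟩

theorem exists_common_refinement (hSt : S < t) (P₁ P₂ : IntervalPartition S t) :
    ∃ Q : IntervalPartition S t, P₁.points ⊆ Q.points ∧ P₂.points ⊆ Q.points := by
  have hmem : ∀ x ∈ P₁.points ∪ P₂.points, x ∈ Icc S t := by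
    simp only [Finset.mem_union, mem_points]
    rintro x (⟨i, hi, rfl⟩ | ⟨i, hi, rfl⟩)
    exacts [P₁.pts_mem_Icc hi, P₂.pts_mem_Icc hi]
  have hS : S ∈ P₁.points := P₁.mem_points.mpr ⟨0, Nat.zero_le _, P₁.first⟩
  have ht : t ∈ P₁.points := P₁.mem_points.mpr ⟨P₁.N, le_rfl, P₁.last⟩
  obtain ⟨Q, hQ⟩ := exists_points_eq hSt (Finset.mem_union_left _ hS)
    (Finset.mem_union_left _ ht) hmem
  exact ⟨Q, hQ ▸ Finset.subset_union_left, hQ ▸ Finset.subset_union_right⟩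

end IntervalPartition

theorem Finset.sum_range_sub_eq_sum_Ico_of_blocks {β : Type*} [AddCommGroup β] {e c : ℕ → ℕ}
    {M : ℕ} (he : MonotoneOn e (Set.Iic M))
    (hc : ∀ i < M, ∀ k ∈ Finset.Ico (e i) (e (i + 1)), c k = i)
    (F : ℕ → ℕ → β) :
    ∑ i ∈ range M, (F i (e (i + 1)) - F i (e i)) =
      ∑ k ∈ Finset.Ico (e 0) (e M), (F (c k) (k + 1) - F (c k) k) := by
  induction M with
  | zero => simp
  | succ M ih =>
    have h0 : (0 : ℕ) ∈ Set.Iic (M + 1) := Set.mem_Iic.mpr (Nat.zero_le _)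
    have hM : M ∈ Set.Iic (M + 1) := Set.mem_Iic.mpr M.le_succ
    have hM' : M + 1 ∈ Set.Iic (M + 1) := Set.mem_Iic.mpr le_rfl
    rw [Finset.sum_range_succ, ih (he.mono (Set.Iic_subset_Iic.mpr M.le_succ))
      (fun i hi => hc i (by omega)), ← Finset.sum_Ico_consecutive _ (he h0 hM (Nat.zero_le M))
      (he hM hM' M.le_succ), ← Finset.sum_Ico_sub _ (he hM hM' M.le_succ)]
    congr 1
    exact Finset.sum_congr rfl fun k hk => by rw [hc M M.lt_succ_self k hk]

theorem exists_block_index {e : ℕ → ℕ} {M : ℕ} (he : StrictMonoOn e (Iic M)) :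
    ∃ c : ℕ → ℕ, (∀ i < M, ∀ k ∈ Finset.Ico (e i) (e (i + 1)), c k = i) ∧
      ∀ k ∈ Finset.Ico (e 0) (e M), c k < M ∧ k ∈ Finset.Ico (e (c k)) (e (c k + 1)) := by
  classical
  refine ⟨fun k => Nat.findGreatest (fun i => e i ≤ k) M, fun i hi k hk => ?_, fun k hk => ?_⟩
  · rw [Finset.mem_Ico] at hk
    refine Nat.findGreatest_eq_iff.mpr ⟨hi.le, fun _ => hk.1, fun l hil hlM => ?_⟩
    exact (hk.2.trans_le (he.monotoneOn (show i + 1 ∈ Iic M from hi) hlM hil)).not_ge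
  · rw [Finset.mem_Ico] at hk ⊢
    set c := Nat.findGreatest (fun i => e i ≤ k) M
    have hck : e c ≤ k := Nat.findGreatest_spec (P := fun i => e i ≤ k) (Nat.zero_le M) hk.1
    have hcM : c < M := lt_of_le_of_ne (Nat.findGreatest_le M) fun h => by
      rw [h] at hck; omega
    exact ⟨hcM, hck, not_le.mp fun h => (Nat.le_findGreatest hcM h).not_gt c.lt_succ_self⟩

namespace IntervalPartition

variable {S t : ℝ}

theorem exists_index_of_points_subset {P Q : IntervalPartition S t} (h : P.points ⊆ Q.points) :
    ∃ e : ℕ → ℕ, StrictMonoOn e (Iic P.N) ∧ e 0 = 0 ∧ e P.N = Q.N ∧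
      ∀ i ≤ P.N, e i ≤ Q.N ∧ Q.pts (e i) = P.pts i := by
  have : ∀ i, ∃ k, i ≤ P.N → k ≤ Q.N ∧ Q.pts k = P.pts i := fun i => by
    by_cases hi : i ≤ P.N
    · obtain ⟨k, hk, hki⟩ := Q.mem_points.mp (h (P.mem_points.mpr ⟨i, hi, rfl⟩))
      exact ⟨k, fun _ => ⟨hk, hki⟩⟩
    · exact ⟨0, fun h' => absurd h' hi⟩
  choose e he using this
  have hQ := Q.strictMonoOn_pts
  refine ⟨e, fun i hi i' hi' hii' => ?_, ?_, ?_, he⟩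
  · rw [← hQ.lt_iff_lt (he i hi).1 (he i' hi').1, (he i hi).2, (he i' hi').2]
    exact P.strictMonoOn_pts hi hi' hii'
  · have h0 := he 0 (Nat.zero_le _)
    exact hQ.injOn h0.1 (Nat.zero_le Q.N) (by rw [h0.2, P.first, Q.first])
  · have hN := he P.N le_rfl
    exact hQ.injOn hN.1 (le_refl Q.N) (by rw [hN.2, P.last, Q.last])

theorem exists_sum_sub_eq_sum_refinement {P Q : IntervalPartition S t}
    (h : P.points ⊆ Q.points) :
    ∃ c : ℕ → ℕ, (∀ k < Q.N, c k < P.N ∧ P.pts (c k) ≤ Q.pts k ∧ Q.pts (k + 1) ≤ P.pts (c k + 1)) ∧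
      ∀ F : ℕ → ℝ → ℝ, ∑ i ∈ range P.N, (F i (P.pts (i + 1)) - F i (P.pts i)) =
        ∑ k ∈ range Q.N, (F (c k) (Q.pts (k + 1)) - F (c k) (Q.pts k)) := by
  obtain ⟨e, he, he0, heN, heQ⟩ := exists_index_of_points_subset h
  obtain ⟨c, hc, hcov⟩ := exists_block_index he
  have hQ := Q.strictMonoOn_pts.monotoneOn
  refine ⟨c, fun k hk => ?_, fun F => ?_⟩
  · obtain ⟨hcP, hk₁, hk₂⟩ : c k < P.N ∧ e (c k) ≤ k ∧ k < e (c k + 1) := by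
      simpa only [Finset.mem_Ico] using hcov k (by rw [he0, heN]; simpa using hk)
    refine ⟨hcP, ?_, ?_⟩
    · rw [← (heQ _ hcP.le).2]
      exact hQ (heQ _ hcP.le).1 (show k ≤ Q.N by omega) hk₁
    · rw [← (heQ _ hcP).2]
      exact hQ (show k + 1 ≤ Q.N by omega) (heQ _ hcP).1 hk₂
  · calc ∑ i ∈ range P.N, (F i (P.pts (i + 1)) - F i (P.pts i))
        = ∑ i ∈ range P.N, (F i (Q.pts (e (i + 1))) - F i (Q.pts (e i))) :=
          Finset.sum_congr rfl fun i hi => by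
            rw [Finset.mem_range] at hi
            rw [(heQ i hi.le).2, (heQ (i + 1) hi).2]
      _ = ∑ k ∈ range Q.N, (F (c k) (Q.pts (k + 1)) - F (c k) (Q.pts k)) := by
          rw [Finset.sum_range_sub_eq_sum_Ico_of_blocks he.monotoneOn hc
            (fun i k => F i (Q.pts k)), he0, heN, Finset.range_eq_Ico]

end IntervalPartition

section Pairing

variable {n r : ℕ} (m : ℝ → En n → En r) {S T : ℝ}

theorem discretePairing_eq_sum_inner (P : IntervalPartition S T) (ξ : ℕ → En n) (g : ℝ → En r) :
    discretePairing m P ξ g = ∑ i ∈ range P.N,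
      ⟪g (P.pts i), m (P.pts (i + 1)) (ξ i) - m (P.pts i) (ξ i)⟫_ℝ := by
  refine Finset.sum_congr rfl fun i _ => ?_
  simp only [PiLp.inner_apply, PiLp.sub_apply, RCLike.inner_apply, conj_trivial, mul_comm]

theorem exists_discretePairing_eq_sum_refinement {P Q : IntervalPartition S T}
    (h : P.points ⊆ Q.points) (ξ : ℕ → En n) (g : ℝ → En r) :
    ∃ c : ℕ → ℕ, (∀ k < Q.N, c k < P.N ∧ P.pts (c k) ≤ Q.pts k ∧ Q.pts (k + 1) ≤ P.pts (c k + 1)) ∧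
      discretePairing m P ξ g = ∑ k ∈ range Q.N,
        ⟪g (P.pts (c k)), m (Q.pts (k + 1)) (ξ (c k)) - m (Q.pts k) (ξ (c k))⟫_ℝ := by
  obtain ⟨c, hc, hsum⟩ := IntervalPartition.exists_sum_sub_eq_sum_refinement h
  refine ⟨c, hc, ?_⟩
  simpa only [discretePairing_eq_sum_inner, inner_sub_right]
    using hsum fun i s => ⟪g (P.pts i), m s (ξ i)⟫_ℝ

end Pairing

section Variation

variable {E α : Type*} [NormedAddCommGroup E] [PseudoEMetricSpace α]

/-- The supremum in the summand of `fSum` for the interval `[a, b]`. -/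
def tubeVariation (m : ℝ → E → α) (xbar : ℝ → E) (δ a b : ℝ) : ℝ≥0∞ :=
  ⨆ x ∈ xbar '' Icc a b + closedBall (0 : E) δ, edist (m b x) (m a x)

variable {m : ℝ → E → α} {xbar : ℝ → E}

theorem edist_le_tubeVariation {δ a b : ℝ} (hab : a ≤ b) {x : E} (hx : dist x (xbar a) ≤ δ) :
    edist (m b x) (m a x) ≤ tubeVariation m xbar δ a b := by
  refine le_iSup₂ (f := fun x _ => edist (m b x) (m a x)) x ?_
  rw [← add_sub_cancel (xbar a) x]
  exact add_mem_add (mem_image_of_mem xbar (left_mem_Icc.mpr hab))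
    (mem_closedBall_zero_iff.mpr (by rwa [← dist_eq_norm]))

theorem fEtaEps_mono {δ₁ δ₂ ε₁ ε₂ S T : ℝ} (hδ : δ₁ ≤ δ₂) (hε : ε₁ ≤ ε₂) :
    fEtaEps m xbar δ₁ ε₁ S T ≤ fEtaEps m xbar δ₂ ε₂ S T :=
  iSup₂_mono' fun P hP => ⟨P, fun i hi => (hP i hi).trans hε,
    Finset.sum_le_sum fun _ _ => biSup_mono fun _ hx => Set.add_subset_add_left
      (closedBall_subset_closedBall hδ) hx⟩

theorem FunHasBVAlong.exists_fEtaEps_lt_top {S T : ℝ} (h : FunHasBVAlong m xbar S T) :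
    ∃ δ > 0, ∃ ε > 0, fEtaEps m xbar δ ε S T < ⊤ := by
  simpa only [FunHasBVAlong, fEta, fEtaDelta, iInf_lt_iff, exists_prop] using h

theorem sum_tubeVariation_le_fEtaEps {δ ε S T : ℝ} {Q : IntervalPartition S T}
    (hQ : Q.diamLE ε) :
    ∑ k ∈ range Q.N, tubeVariation m xbar δ (Q.pts k) (Q.pts (k + 1)) ≤
      fEtaEps m xbar δ ε S T :=
  le_iSup₂ (f := fun (P : IntervalPartition S T) (_ : P.diamLE ε) => fSum m xbar δ P) Q hQ

theorem tubeVariation_ne_top {δ ε S T : ℝ} (hfin : fEtaEps m xbar δ ε S T ≠ ⊤)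
    {Q : IntervalPartition S T} (hQ : Q.diamLE ε) {k : ℕ} (hk : k < Q.N) :
    tubeVariation m xbar δ (Q.pts k) (Q.pts (k + 1)) ≠ ⊤ :=
  ne_top_of_le_ne_top hfin <| (Finset.single_le_sum (fun _ _ => zero_le)
    (Finset.mem_range.mpr hk)).trans (sum_tubeVariation_le_fEtaEps hQ)

theorem sum_toReal_tubeVariation_le {δ ε S T : ℝ} (hfin : fEtaEps m xbar δ ε S T ≠ ⊤)
    {Q : IntervalPartition S T} (hQ : Q.diamLE ε) :
    ∑ k ∈ range Q.N, (tubeVariation m xbar δ (Q.pts k) (Q.pts (k + 1))).toReal ≤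
      (fEtaEps m xbar δ ε S T).toReal := by
  rw [← ENNReal.toReal_sum fun k hk => tubeVariation_ne_top hfin hQ (Finset.mem_range.mp hk)]
  exact ENNReal.toReal_mono hfin (sum_tubeVariation_le_fEtaEps hQ)

theorem norm_sub_le_tubeVariation {F : Type*} [NormedAddCommGroup F] {m : ℝ → E → F}
    {δ a b : ℝ} (hfin : tubeVariation m xbar δ a b ≠ ⊤) (hab : a ≤ b) {x : E}
    (hx : dist x (xbar a) ≤ δ) : ‖m b x - m a x‖ ≤ (tubeVariation m xbar δ a b).toReal := by
  rw [← dist_eq_norm, dist_edist]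
  exact ENNReal.toReal_mono hfin (edist_le_tubeVariation hab hx)

end Variation

theorem abs_inner_sub_inner_le {F : Type*} [NormedAddCommGroup F] [InnerProductSpace ℝ F]
    (u v a b : F) : |⟪u, a⟫_ℝ - ⟪v, b⟫_ℝ| ≤ ‖u - v‖ * ‖a‖ + ‖v‖ * ‖a - b‖ :=
  calc |⟪u, a⟫_ℝ - ⟪v, b⟫_ℝ| = |⟪u - v, a⟫_ℝ + ⟪v, a - b⟫_ℝ| := by
        rw [inner_sub_left, inner_sub_right]; ring_nf
    _ ≤ |⟪u - v, a⟫_ℝ| + |⟪v, a - b⟫_ℝ| := abs_add_le _ _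
    _ ≤ ‖u - v‖ * ‖a‖ + ‖v‖ * ‖a - b‖ :=
        add_le_add (abs_real_inner_le_norm _ _) (abs_real_inner_le_norm _ _)

theorem norm_sub_sub_sub_le_of_norm_fderiv_sub_le {E F : Type*} [NormedAddCommGroup E]
    [NormedSpace ℝ E] [NormedAddCommGroup F] [NormedSpace ℝ F] {f₀ f₁ : E → F} {s : Set E}
    (hs : Convex ℝ s) (hf₀ : ∀ x ∈ s, DifferentiableAt ℝ f₀ x)
    (hf₁ : ∀ x ∈ s, DifferentiableAt ℝ f₁ x) {M : ℝ}
    (hM : ∀ x ∈ s, ‖fderiv ℝ f₁ x - fderiv ℝ f₀ x‖ ≤ M) {x y : E} (hx : x ∈ s) (hy : y ∈ s) :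
    ‖(f₁ x - f₀ x) - (f₁ y - f₀ y)‖ ≤ M * ‖x - y‖ :=
  hs.norm_image_sub_le_of_norm_fderiv_le (fun z hz => (hf₁ z hz).sub (hf₀ z hz))
    (fun z hz => by rw [fderiv_sub (hf₁ z hz) (hf₀ z hz)]; exact hM z hz) hy hx

section Estimate

variable {n r : ℕ} {m : ℝ → En n → En r} {xbar : ℝ → En n} {S T δ δ' ε : ℝ}

theorem abs_sum_inner_sub_sum_inner_le
    (hdiff : ∀ t ∈ Icc S T, DifferentiableOn ℝ (m t) (ball (xbar t) δ'))
    (hfin₁ : fEtaEps m xbar δ ε S T ≠ ⊤)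
    (hfin₂ : fEtaEps (fun t x => fderiv ℝ (m t) x) xbar δ ε S T ≠ ⊤)
    {Q : IntervalPartition S T} (hQ : Q.diamLE ε) {ρ κ G : ℝ} (hρδ : ρ ≤ δ) (hρδ' : 2 * ρ ≤ δ')
    (hxbar : ∀ k < Q.N, dist (xbar (Q.pts (k + 1))) (xbar (Q.pts k)) ≤ ρ)
    {u₁ u₂ : ℕ → En r} {y₁ y₂ : ℕ → En n}
    (hu : ∀ k < Q.N, ‖u₁ k - u₂ k‖ ≤ κ) (hG : ∀ k < Q.N, ‖u₂ k‖ ≤ G)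
    (hy₁ : ∀ k < Q.N, y₁ k ∈ ball (xbar (Q.pts k)) ρ)
    (hy₂ : ∀ k < Q.N, y₂ k ∈ ball (xbar (Q.pts k)) ρ) :
    |∑ k ∈ range Q.N, ⟪u₁ k, m (Q.pts (k + 1)) (y₁ k) - m (Q.pts k) (y₁ k)⟫_ℝ -
      ∑ k ∈ range Q.N, ⟪u₂ k, m (Q.pts (k + 1)) (y₂ k) - m (Q.pts k) (y₂ k)⟫_ℝ| ≤
      κ * (fEtaEps m xbar δ ε S T).toReal +
        G * (2 * ρ) * (fEtaEps (fun t x => fderiv ℝ (m t) x) xbar δ ε S T).toReal := by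
  set V₁ := fun k => (tubeVariation m xbar δ (Q.pts k) (Q.pts (k + 1))).toReal
  set V₂ := fun k =>
    (tubeVariation (fun t x => fderiv ℝ (m t) x) xbar δ (Q.pts k) (Q.pts (k + 1))).toReal
  have hκ : 0 ≤ κ := (norm_nonneg _).trans (hu 0 Q.hN)
  have hG0 : 0 ≤ G := (norm_nonneg _).trans (hG 0 Q.hN)
  have hρ : 0 ≤ ρ := dist_nonneg.trans (mem_ball.mp (hy₁ 0 Q.hN)).le
  have hterm : ∀ k < Q.N,
      |⟪u₁ k, m (Q.pts (k + 1)) (y₁ k) - m (Q.pts k) (y₁ k)⟫_ℝ -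
        ⟪u₂ k, m (Q.pts (k + 1)) (y₂ k) - m (Q.pts k) (y₂ k)⟫_ℝ| ≤
        κ * V₁ k + G * (2 * ρ) * V₂ k := by
    intro k hk
    have hab : Q.pts k ≤ Q.pts (k + 1) := (Q.mono k hk).le
    have hdiffAt : ∀ t ∈ Icc S T, ∀ x ∈ ball (xbar (Q.pts k)) ρ,
        dist (xbar t) (xbar (Q.pts k)) ≤ ρ → DifferentiableAt ℝ (m t) x := by
      intro t ht x hx htk
      refine (hdiff t ht).differentiableAt (isOpen_ball.mem_nhds (mem_ball.mpr ?_))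
      linarith [mem_ball.mp hx, dist_triangle x (xbar (Q.pts k)) (xbar t),
        dist_comm (xbar t) (xbar (Q.pts k))]
    have hmvt := norm_sub_sub_sub_le_of_norm_fderiv_sub_le (convex_ball _ _)
      (fun x hx => hdiffAt _ (Q.pts_mem_Icc hk.le) x hx (by simpa using hρ))
      (fun x hx => hdiffAt _ (Q.pts_mem_Icc hk) x hx (hxbar k hk))
      (fun x hx => norm_sub_le_tubeVariation (m := fun t x => fderiv ℝ (m t) x)
        (tubeVariation_ne_top hfin₂ hQ hk) hab ((mem_ball.mp hx).le.trans hρδ))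
      (hy₁ k hk) (hy₂ k hk)
    have hy₁₂ : ‖y₁ k - y₂ k‖ ≤ 2 * ρ := by
      rw [← dist_eq_norm]
      linarith [mem_ball.mp (hy₁ k hk), mem_ball'.mp (hy₂ k hk),
        dist_triangle (y₁ k) (xbar (Q.pts k)) (y₂ k)]
    calc _ ≤ ‖u₁ k - u₂ k‖ * ‖m (Q.pts (k + 1)) (y₁ k) - m (Q.pts k) (y₁ k)‖ + ‖u₂ k‖ *
          ‖(m (Q.pts (k + 1)) (y₁ k) - m (Q.pts k) (y₁ k)) -
            (m (Q.pts (k + 1)) (y₂ k) - m (Q.pts k) (y₂ k))‖ := abs_inner_sub_inner_le _ _ _ _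
      _ ≤ κ * V₁ k + G * (V₂ k * (2 * ρ)) :=
          add_le_add (mul_le_mul (hu k hk) (norm_sub_le_tubeVariation
              (tubeVariation_ne_top hfin₁ hQ hk) hab ((mem_ball.mp (hy₁ k hk)).le.trans hρδ))
              (norm_nonneg _) hκ)
            (mul_le_mul (hG k hk)
              (hmvt.trans (mul_le_mul_of_nonneg_left hy₁₂ ENNReal.toReal_nonneg))
              (norm_nonneg _) hG0)
      _ = κ * V₁ k + G * (2 * ρ) * V₂ k := by ring
  rw [← Finset.sum_sub_distrib]
  calc _ ≤ ∑ k ∈ range Q.N, (κ * V₁ k + G * (2 * ρ) * V₂ k) :=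
        (Finset.abs_sum_le_sum_abs _ _).trans
          (Finset.sum_le_sum fun k hk => hterm k (Finset.mem_range.mp hk))
    _ = κ * ∑ k ∈ range Q.N, V₁ k + G * (2 * ρ) * ∑ k ∈ range Q.N, V₂ k := by
        rw [Finset.sum_add_distrib, Finset.mul_sum, Finset.mul_sum]
    _ ≤ _ := by
        gcongr
        exacts [sum_toReal_tubeVariation_le hfin₁ hQ, sum_toReal_tubeVariation_le hfin₂ hQ]

end Estimate

section Cauchy

variable {n r : ℕ} {m : ℝ → En n → En r} {xbar : ℝ → En n} {S T δ δ' ε : ℝ}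

theorem exists_discretePairing_eq_sum_near {P Q : IntervalPartition S T}
    (hPQ : P.points ⊆ Q.points) {η κ : ℝ} (hP : P.diamLE η) {ξ : ℕ → En n} {g : ℝ → En r}
    (hξ : ∀ i < P.N, ∃ t ∈ Icc (P.pts i) (P.pts (i + 1)), ξ i ∈ closedBall (xbar t) (κ / 2))
    (hgη : ∀ s ∈ Icc S T, ∀ t ∈ Icc S T, dist s t ≤ η → dist (g s) (g t) ≤ κ / 2)
    (hxη : ∀ s ∈ Icc S T, ∀ t ∈ Icc S T, dist s t ≤ η → dist (xbar s) (xbar t) < κ / 2) :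
    ∃ (u : ℕ → En r) (y : ℕ → En n), discretePairing m P ξ g =
        ∑ k ∈ range Q.N, ⟪u k, m (Q.pts (k + 1)) (y k) - m (Q.pts k) (y k)⟫_ℝ ∧
      ∀ k < Q.N, u k ∈ g '' Icc S T ∧ dist (u k) (g (Q.pts k)) ≤ κ / 2 ∧
        y k ∈ ball (xbar (Q.pts k)) κ ∧ Q.pts (k + 1) - Q.pts k ≤ η := by
  obtain ⟨c, hc, hsum⟩ := exists_discretePairing_eq_sum_refinement m hPQ ξ g
  refine ⟨fun k => g (P.pts (c k)), fun k => ξ (c k), hsum, fun k hk => ?_⟩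
  obtain ⟨hcP, hlo, hhi⟩ := hc k hk
  have hIST : Icc (P.pts (c k)) (P.pts (c k + 1)) ⊆ Icc S T :=
    Icc_subset_Icc (P.pts_mem_Icc hcP.le).1 (P.pts_mem_Icc hcP).2
  have hdist : ∀ s ∈ Icc (P.pts (c k)) (P.pts (c k + 1)),
      ∀ t ∈ Icc (P.pts (c k)) (P.pts (c k + 1)), dist s t ≤ η :=
    fun s hs t ht => (Real.dist_le_of_mem_Icc hs ht).trans (hP _ hcP)
  have hQk : Q.pts k ∈ Icc (P.pts (c k)) (P.pts (c k + 1)) := ⟨hlo, (Q.mono k hk).le.trans hhi⟩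
  have hPc : P.pts (c k) ∈ Icc (P.pts (c k)) (P.pts (c k + 1)) :=
    left_mem_Icc.mpr (P.mono _ hcP).le
  obtain ⟨t, ht, hξt⟩ := hξ (c k) hcP
  refine ⟨mem_image_of_mem g (hIST hPc), hgη _ (hIST hPc) _ (hIST hQk) (hdist _ hPc _ hQk),
    mem_ball.mpr ?_, by linarith [hP _ hcP]⟩
  linarith [dist_triangle (ξ (c k)) (xbar t) (xbar (Q.pts k)), mem_closedBall.mp hξt,
    hxη t (hIST ht) _ (hIST hQk) (hdist _ ht _ hQk)]

theorem dist_discretePairing_le (hST : S < T)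
    (hdiff : ∀ t ∈ Icc S T, DifferentiableOn ℝ (m t) (ball (xbar t) δ'))
    (hfin₁ : fEtaEps m xbar δ ε S T ≠ ⊤)
    (hfin₂ : fEtaEps (fun t x => fderiv ℝ (m t) x) xbar δ ε S T ≠ ⊤)
    {η κ G : ℝ} (hηε : η ≤ ε) (hκδ : κ ≤ δ) (hκδ' : 2 * κ ≤ δ') {g : ℝ → En r}
    (hG : ∀ t ∈ Icc S T, ‖g t‖ ≤ G)
    (hgη : ∀ s ∈ Icc S T, ∀ t ∈ Icc S T, dist s t ≤ η → dist (g s) (g t) ≤ κ / 2)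
    (hxη : ∀ s ∈ Icc S T, ∀ t ∈ Icc S T, dist s t ≤ η → dist (xbar s) (xbar t) < κ / 2)
    {P₁ P₂ : IntervalPartition S T} (hP₁ : P₁.diamLE η) (hP₂ : P₂.diamLE η)
    {ξ₁ ξ₂ : ℕ → En n}
    (hξ₁ : ∀ i < P₁.N, ∃ t ∈ Icc (P₁.pts i) (P₁.pts (i + 1)), ξ₁ i ∈ closedBall (xbar t) (κ / 2))
    (hξ₂ : ∀ i < P₂.N, ∃ t ∈ Icc (P₂.pts i) (P₂.pts (i + 1)), ξ₂ i ∈ closedBall (xbar t) (κ / 2)) :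
    dist (discretePairing m P₁ ξ₁ g) (discretePairing m P₂ ξ₂ g) ≤
      κ * (fEtaEps m xbar δ ε S T).toReal +
        G * (2 * κ) * (fEtaEps (fun t x => fderiv ℝ (m t) x) xbar δ ε S T).toReal := by
  obtain ⟨Q, h₁, h₂⟩ := IntervalPartition.exists_common_refinement hST P₁ P₂
  obtain ⟨u₁, y₁, hsum₁, hnear₁⟩ := exists_discretePairing_eq_sum_near (m := m) h₁ hP₁ hξ₁ hgη hxη
  obtain ⟨u₂, y₂, hsum₂, hnear₂⟩ := exists_discretePairing_eq_sum_near (m := m) h₂ hP₂ hξ₂ hgη hxη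
  rw [Real.dist_eq, hsum₁, hsum₂]
  refine abs_sum_inner_sub_sum_inner_le hdiff hfin₁ hfin₂
    (fun k hk => (hnear₁ k hk).2.2.2.trans hηε) hκδ hκδ' (fun k hk => ?_) (fun k hk => ?_)
    (fun k hk => ?_) (fun k hk => (hnear₁ k hk).2.2.1) (fun k hk => (hnear₂ k hk).2.2.1)
  · have hlen : dist (Q.pts (k + 1)) (Q.pts k) ≤ η := by
      rw [Real.dist_eq, abs_of_pos (sub_pos.mpr (Q.mono k hk))]
      exact (hnear₁ k hk).2.2.2
    linarith [dist_nonneg (x := xbar (Q.pts (k + 1))) (y := xbar (Q.pts k)),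
      hxη _ (Q.pts_mem_Icc hk) _ (Q.pts_mem_Icc hk.le) hlen]
  · rw [← dist_eq_norm]
    linarith [dist_triangle_right (u₁ k) (u₂ k) (g (Q.pts k)), (hnear₁ k hk).2.1,
      (hnear₂ k hk).2.1]
  · obtain ⟨τ, hτ, hu⟩ := (hnear₂ k hk).1
    exact hu ▸ hG τ hτ

theorem exists_forall_dist_discretePairing_le (hST : S < T)
    (hdiff : ∀ t ∈ Icc S T, DifferentiableOn ℝ (m t) (ball (xbar t) δ'))
    (hxbar : ContinuousOn xbar (Icc S T))
    (hfin₁ : fEtaEps m xbar δ ε S T ≠ ⊤)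
    (hfin₂ : fEtaEps (fun t x => fderiv ℝ (m t) x) xbar δ ε S T ≠ ⊤) (hε : 0 < ε)
    {P : ℕ → IntervalPartition S T} (hdiam : ∀ ε : ℝ, 0 < ε → ∃ J : ℕ, ∀ j ≥ J, (P j).diamLE ε)
    {ρ : ℕ → ℝ} (hρ : Tendsto ρ atTop (𝓝 0)) {ξ : ℕ → ℕ → En n}
    (hξ : ∀ j i, i < (P j).N →
      ∃ t ∈ Icc ((P j).pts i) ((P j).pts (i + 1)), ξ j i ∈ closedBall (xbar t) (ρ j))
    {g : ℝ → En r} (hg : ContinuousOn g (Icc S T)) {G : ℝ} (hG : ∀ t ∈ Icc S T, ‖g t‖ ≤ G)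
    {κ : ℝ} (hκ : 0 < κ) (hκδ : κ ≤ δ) (hκδ' : 2 * κ ≤ δ') :
    ∃ N, ∀ j ≥ N, ∀ j' ≥ N, dist (discretePairing m (P j) (ξ j) g)
      (discretePairing m (P j') (ξ j') g) ≤
        ((fEtaEps m xbar δ ε S T).toReal +
          2 * G * (fEtaEps (fun t x => fderiv ℝ (m t) x) xbar δ ε S T).toReal) * κ := by
  obtain ⟨ηg, hηg, hgη⟩ := Metric.uniformContinuousOn_iff_le.mp
    (isCompact_Icc.uniformContinuousOn_of_continuous hg) (κ / 2) (half_pos hκ)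
  obtain ⟨ηx, hηx, hxη⟩ := Metric.uniformContinuousOn_iff.mp
    (isCompact_Icc.uniformContinuousOn_of_continuous hxbar) (κ / 2) (half_pos hκ)
  set η := min (min ηg (ηx / 2)) ε
  have hη : 0 < η := lt_min (lt_min hηg (half_pos hηx)) hε
  obtain ⟨J₁, hJ₁⟩ := hdiam η hη
  obtain ⟨J₂, hJ₂⟩ := eventually_atTop.mp (hρ.eventually (ge_mem_nhds (half_pos hκ)))
  have htags : ∀ j ≥ J₂, ∀ i < (P j).N,
      ∃ t ∈ Icc ((P j).pts i) ((P j).pts (i + 1)), ξ j i ∈ closedBall (xbar t) (κ / 2) :=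
    fun j hj i hi => (hξ j i hi).imp fun t ⟨ht, hξt⟩ =>
      ⟨ht, closedBall_subset_closedBall (hJ₂ j hj) hξt⟩
  have hgη' : ∀ s ∈ Icc S T, ∀ t ∈ Icc S T, dist s t ≤ η → dist (g s) (g t) ≤ κ / 2 :=
    fun s hs t ht hst => hgη s hs t ht (hst.trans ((min_le_left _ _).trans (min_le_left _ _)))
  have hxη' : ∀ s ∈ Icc S T, ∀ t ∈ Icc S T, dist s t ≤ η → dist (xbar s) (xbar t) < κ / 2 :=
    fun s hs t ht hst => hxη s hs t ht (hst.trans_lt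
      ((min_le_left _ _).trans_lt ((min_le_right _ _).trans_lt (half_lt_self hηx))))
  refine ⟨max J₁ J₂, fun j hj j' hj' => ?_⟩
  exact (dist_discretePairing_le hST hdiff hfin₁ hfin₂ (min_le_right _ _) hκδ hκδ' hG hgη' hxη'
    (hJ₁ j (le_of_max_le_left hj)) (hJ₁ j' (le_of_max_le_left hj'))
    (htags j (le_of_max_le_right hj)) (htags j' (le_of_max_le_right hj'))).trans_eq (by ring)

end Cauchy

theorem cauchySeq_of_forall_dist_le_mul {α : Type*} [PseudoMetricSpace α] {s : ℕ → α}
    {C r₀ : ℝ} (hr₀ : 0 < r₀)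
    (h : ∀ κ, 0 < κ → κ ≤ r₀ → ∃ N, ∀ j ≥ N, ∀ j' ≥ N, dist (s j) (s j') ≤ C * κ) :
    CauchySeq s := by
  refine Metric.cauchySeq_iff.mpr fun ε hε => ?_
  set κ := min r₀ (ε / (|C| + 1))
  have hκ : 0 < κ := lt_min hr₀ (by positivity)
  obtain ⟨N, hN⟩ := h κ hκ (min_le_left _ _)
  refine ⟨N, fun j hj j' hj' => (hN j hj j' hj').trans_lt ?_⟩
  calc C * κ ≤ |C| * (ε / (|C| + 1)) :=
        mul_le_mul (le_abs_self C) (min_le_right _ _) hκ.le (abs_nonneg C)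
    _ < ε := by
        rw [mul_div_assoc', div_lt_iff₀ (by positivity)]
        nlinarith

theorem statement14_general {n r : ℕ} (m : ℝ → En n → En r) (xbar : ℝ → En n)
    (S T : ℝ) (hST : S < T) (δ' : ℝ)
    (hBV1 : HypBV1 m xbar S T δ') (hBV2 : HypBV2 m xbar S T)
    (P : ℕ → IntervalPartition S T)
    (hdiam : ∀ ε : ℝ, 0 < ε → ∃ J : ℕ, ∀ j ≥ J, (P j).diamLE ε)
    (ρ : ℕ → ℝ)
    (hρ : Tendsto ρ atTop (𝓝 0))
    (ξ : ℕ → ℕ → En n)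
    (hξ : ∀ j i, i < (P j).N →
      ∃ t ∈ Set.Icc ((P j).pts i) ((P j).pts (i + 1)),
        ξ j i ∈ Metric.closedBall (xbar t) (ρ j)) :
    ∀ g : ℝ → En r, Continuous g →
      CauchySeq fun j => discretePairing m (P j) (ξ j) g := by
  intro g hg
  obtain ⟨hxbar, hδ', hC1⟩ := hBV1
  obtain ⟨δ₁, hδ₁, ε₁, hε₁, hfin₁⟩ := hBV2.1.exists_fEtaEps_lt_top
  obtain ⟨δ₂, hδ₂, ε₂, hε₂, hfin₂⟩ := hBV2.2.exists_fEtaEps_lt_top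
  obtain ⟨G, hG⟩ := isCompact_Icc.exists_bound_of_continuousOn (s := Icc S T) hg.continuousOn
  refine cauchySeq_of_forall_dist_le_mul (r₀ := min (min δ₁ δ₂) (δ' / 2))
    (lt_min (lt_min hδ₁ hδ₂) (half_pos hδ')) fun κ hκ hκr₀ =>
      exists_forall_dist_discretePairing_le hST
        (fun t ht => (hC1 t ht).differentiableOn one_ne_zero) hxbar
        (hfin₁.trans_le' (fEtaEps_mono (min_le_left δ₁ δ₂) (min_le_left ε₁ ε₂))).ne
        (hfin₂.trans_le' (fEtaEps_mono (min_le_right δ₁ δ₂) (min_le_right ε₁ ε₂))).ne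
        (lt_min hε₁ hε₂) hdiam hρ hξ hg.continuousOn hG hκ (hκr₀.trans (min_le_left _ _))
        (by linarith [hκr₀.trans (min_le_right _ _)])

/-- Under (BV1) and (BV2), for any admissible sequence of partitions
of `[S,T]` (diameters tending to `0`), `ρʲ ↓ 0` and vectors `ξʲᵢ ∈ x̄(t) + ρʲ𝔹`,
`t ∈ [tʲᵢ,tʲᵢ₊₁]`, and for every continuous `g : [S,T] → ℝʳ`, the sequence of
pairings `⟨μʲ, g⟩` is a Cauchy sequence of real numbers. -/
theorem statement14 {n r : ℕ} (m : ℝ → En n → En r) (xbar : ℝ → En n)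
    (S T : ℝ) (hST : S < T) (δ' : ℝ)
    (hBV1 : HypBV1 m xbar S T δ') (hBV2 : HypBV2 m xbar S T)
    (P : ℕ → IntervalPartition S T)
    (hdiam : ∀ ε : ℝ, 0 < ε → ∃ J : ℕ, ∀ j ≥ J, (P j).diamLE ε)
    (ρ : ℕ → ℝ) (hρpos : ∀ j, 0 < ρ j) (hρanti : Antitone ρ)
    (hρ : Tendsto ρ atTop (𝓝 0))
    (ξ : ℕ → ℕ → En n)
    (hξ : ∀ j i, i < (P j).N →
      ∃ t ∈ Set.Icc ((P j).pts i) ((P j).pts (i + 1)),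
        ξ j i ∈ Metric.closedBall (xbar t) (ρ j)) :
    ∀ g : ℝ → En r, Continuous g →
      CauchySeq fun j => discretePairing m (P j) (ξ j) g :=
  statement14_general m xbar S T hST δ' hBV1 hBV2 P hdiam ρ hρ ξ hξ
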